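/- arXiv:2003.09067 — 2 statements merged into one kernel-verified Lean document; each statement's English description precedes it below -/
import Mathlib

section
/- For all real numbers s, s' and any s̄ ∈ ℝ satisfying β(s̄) = (β(s) + β(s'))/2 (such an s̄ exists by the intermediate value theorem), one has (ν(s) − ν(s'))² ≤ 4 L_β L_ζ · [𝔅(s) + 𝔅(s') − 2 𝔅(s̄)], where ν(s) = ∫₀ˢ ζ'(q) β'(q) dq and 𝔅(s) = ∫₀ˢ ζ(q) β'(q) dq. -/
/-!
Put `H x = ∫ t in m..x, ζ' t * β' t`. Since `H` is absolutely continuous, the fundamental theorem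
of calculus for `H ^ 2` gives `H x ^ 2 = 2 ∫ t in m..x, H t * ζ' t * β' t`. With `0 ≤ β' ≤ Lβ` and
`0 ≤ ζ' ≤ Lζ`, the integrand is compared with `Lβ Lζ (ζ t - ζ m) β' t`: the difference is
`β' t` times a combination with nonnegative coefficients of two primitives of nonnegative
functions started at `m`, so it is `≥ 0` right of `m` and `≤ 0` left of `m`. Hence
`H x ^ 2 ≤ 2 Lβ Lζ (∫ t in m..x, ζ t * β' t - ζ m (β x - β m))` for every `x`. Taking `m = s̄`
and `x = s, s'`, the choice of `s̄` makes the two `ζ s̄` terms cancel, and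
`(a - b) ^ 2 ≤ 2 a ^ 2 + 2 b ^ 2` concludes.
-/

open MeasureTheory intervalIntegral Set

theorem Measurable.intervalIntegrable_of_abs_le {f : ℝ → ℝ} {C : ℝ} (hf : Measurable f)
    (hC : ∀ t, |f t| ≤ C) (a b : ℝ) : IntervalIntegrable f volume a b :=
  intervalIntegrable_const.mono_fun' hf.aestronglyMeasurable (ae_of_all _ hC)

theorem monotone_primitive_of_nonneg {g : ℝ → ℝ} (hg : ∀ t, 0 ≤ g t)
    (hgi : ∀ u v, IntervalIntegrable g volume u v) (a : ℝ) :
    Monotone fun t => ∫ s in a..t, g s := by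
  intro u v huv
  dsimp only
  rw [← integral_add_adjacent_intervals (hgi a u) (hgi u v), le_add_iff_nonneg_right]
  exact integral_nonneg huv fun t _ => hg t

theorem intervalIntegral_nonneg_of_nonneg_right_of_nonpos_left {D : ℝ → ℝ} {a : ℝ}
    (hright : ∀ t, a ≤ t → 0 ≤ D t) (hleft : ∀ t, t ≤ a → D t ≤ 0) (x : ℝ) :
    0 ≤ ∫ t in a..x, D t := by
  rcases le_total a x with hax | hxa
  · exact integral_nonneg hax fun t ht => hright t ht.1
  · have h := integral_nonneg (μ := volume) hxa fun t ht => neg_nonneg.2 (hleft t ht.2)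
    rw [intervalIntegral.integral_neg, neg_nonneg] at h
    rw [integral_symm, neg_nonneg]
    exact h

theorem sq_intervalIntegral_eq_two_mul_integral_primitive_mul {f : ℝ → ℝ} {a b : ℝ}
    (hf : IntervalIntegrable f volume a b) :
    (∫ t in a..b, f t) ^ 2 = 2 * ∫ t in a..b, (∫ s in a..t, f s) * f t := by
  have hF := hf.absolutelyContinuousOnInterval_intervalIntegral left_mem_uIcc
  have hprod := hF.integral_deriv_mul_eq_sub hF
  simp only [integral_same, mul_zero, sub_zero] at hprod
  rw [sq, ← hprod, ← intervalIntegral.integral_const_mul]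
  refine integral_congr_ae ?_
  filter_upwards [hf.ae_hasDerivAt_integral] with t ht htab
  rw [(ht (uIoc_subset_uIcc htab) a left_mem_uIcc).deriv]
  ring

theorem sq_integral_mul_le_two_mul_integral_primitive_mul {z b : ℝ → ℝ} {Lz Lb : ℝ}
    (hzm : Measurable z) (hbm : Measurable b) (hz₀ : ∀ t, 0 ≤ z t) (hzL : ∀ t, z t ≤ Lz)
    (hb₀ : ∀ t, 0 ≤ b t) (hbL : ∀ t, b t ≤ Lb) (a x : ℝ) :
    (∫ t in a..x, z t * b t) ^ 2 ≤ 2 * Lb * Lz * ∫ t in a..x, (∫ s in a..t, z s) * b t := by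
  have hzi : ∀ u v, IntervalIntegrable z volume u v :=
    hzm.intervalIntegrable_of_abs_le fun t => (abs_of_nonneg (hz₀ t)).trans_le (hzL t)
  have hbi : ∀ u v, IntervalIntegrable b volume u v :=
    hbm.intervalIntegrable_of_abs_le fun t => (abs_of_nonneg (hb₀ t)).trans_le (hbL t)
  have hzbi : ∀ u v, IntervalIntegrable (fun t => z t * b t) volume u v :=
    (hzm.mul hbm).intervalIntegrable_of_abs_le fun t => by
      rw [Pi.mul_apply, abs_mul, abs_of_nonneg (hz₀ t), abs_of_nonneg (hb₀ t)]
      exact mul_le_mul (hzL t) (hbL t) (hb₀ t) ((hz₀ t).trans (hzL t))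
  set W := fun t => ∫ s in a..t, z s
  set H := fun t => ∫ s in a..t, z s * b s
  have hW : Monotone W := monotone_primitive_of_nonneg hz₀ hzi a
  have hV : Monotone fun t => Lb * W t - H t := by
    have hV' := monotone_primitive_of_nonneg (g := fun t => Lb * z t - z t * b t)
      (fun t => by nlinarith [hz₀ t, hbL t]) (fun u v => ((hzi u v).const_mul Lb).sub (hzbi u v)) a
    convert hV' using 2 with t
    rw [integral_sub ((hzi a t).const_mul Lb) (hzbi a t), intervalIntegral.integral_const_mul]
  have hWa : W a = 0 := integral_same
  have hHa : H a = 0 := integral_same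
  have hWb : IntervalIntegrable (fun t => W t * b t) volume a x :=
    (hbi a x).continuousOn_mul (continuous_primitive hzi a).continuousOn
  have hHzb : IntervalIntegrable (fun t => H t * (z t * b t)) volume a x :=
    (hzbi a x).continuousOn_mul (continuous_primitive hzbi a).continuousOn
  have hdiff : 2 * Lb * Lz * (∫ t in a..x, W t * b t) - 2 * ∫ t in a..x, H t * (z t * b t)
      = 2 * ∫ t in a..x, Lb * Lz * (W t * b t) - H t * (z t * b t) := by
    rw [integral_sub (hWb.const_mul _) hHzb, intervalIntegral.integral_const_mul]
    ring
  have hD : ∀ t, Lb * Lz * (W t * b t) - H t * (z t * b t)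
      = b t * ((Lz - z t) * Lb * W t + z t * (Lb * W t - H t)) := fun t => by ring
  have hc : ∀ t, 0 ≤ (Lz - z t) * Lb := fun t =>
    mul_nonneg (sub_nonneg.2 (hzL t)) ((hb₀ t).trans (hbL t))
  rw [sq_intervalIntegral_eq_two_mul_integral_primitive_mul (hzbi a x), ← sub_nonneg, hdiff]
  refine mul_nonneg zero_le_two (intervalIntegral_nonneg_of_nonneg_right_of_nonpos_left
    (fun t hat => ?_) (fun t hta => ?_) x) <;> rw [hD]
  · have hWt : 0 ≤ W t := hWa ▸ hW hat
    have hVt : 0 ≤ Lb * W t - H t := by simpa [hWa, hHa] using hV hat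
    exact mul_nonneg (hb₀ t) (add_nonneg (mul_nonneg (hc t) hWt) (mul_nonneg (hz₀ t) hVt))
  · have hWt : W t ≤ 0 := hWa ▸ hW hta
    have hVt : Lb * W t - H t ≤ 0 := by simpa [hWa, hHa] using hV hta
    exact mul_nonpos_of_nonneg_of_nonpos (hb₀ t) (add_nonpos
      (mul_nonpos_of_nonneg_of_nonpos (hc t) hWt) (mul_nonpos_of_nonneg_of_nonpos (hz₀ t) hVt))

theorem LipschitzWith.integral_deriv_eq_sub {f : ℝ → ℝ} {K : NNReal} (hf : LipschitzWith K f)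
    (a b : ℝ) : ∫ t in a..b, deriv f t = f b - f a :=
  (hf.lipschitzOnWith (s := uIcc a b)).absolutelyContinuousOnInterval.integral_deriv_eq_sub

theorem LipschitzWith.intervalIntegrable_deriv {f : ℝ → ℝ} {K : NNReal} (hf : LipschitzWith K f)
    (a b : ℝ) : IntervalIntegrable (deriv f) volume a b :=
  (hf.lipschitzOnWith (s := uIcc a b)).absolutelyContinuousOnInterval.intervalIntegrable_deriv

theorem LipschitzWith.deriv_le {f : ℝ → ℝ} {K : NNReal} (hf : LipschitzWith K f) (t : ℝ) :
    deriv f t ≤ K :=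
  (le_abs_self _).trans (norm_deriv_le_of_lipschitz hf)

theorem sq_integral_deriv_mul_deriv_le {β ζ : ℝ → ℝ} {Kβ Kζ : NNReal} (hβ : Monotone β)
    (hζ : Monotone ζ) (hβK : LipschitzWith Kβ β) (hζK : LipschitzWith Kζ ζ) (m x : ℝ) :
    (∫ t in m..x, deriv ζ t * deriv β t) ^ 2
      ≤ 2 * Kβ * Kζ * ((∫ t in m..x, ζ t * deriv β t) - ζ m * (β x - β m)) := by
  have h := sq_integral_mul_le_two_mul_integral_primitive_mul (measurable_deriv ζ)
    (measurable_deriv β) (fun _ => hζ.deriv_nonneg) hζK.deriv_le (fun _ => hβ.deriv_nonneg)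
    hβK.deriv_le m x
  simp_rw [hζK.integral_deriv_eq_sub, sub_mul] at h
  rwa [integral_sub ((hβK.intervalIntegrable_deriv m x).continuousOn_mul
      hζK.continuous.continuousOn) ((hβK.intervalIntegrable_deriv m x).const_mul _),
    intervalIntegral.integral_const_mul, hβK.integral_deriv_eq_sub] at h

theorem stmt6_general (β ζ : ℝ → ℝ) (Lβ Lζ : ℝ) (hLβ : 0 < Lβ) (hLζ : 0 < Lζ)
    (hβmono : Monotone β) (hζmono : Monotone ζ)
    (hβlip : LipschitzWith Lβ.toNNReal β) (hζlip : LipschitzWith Lζ.toNNReal ζ)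
    (ν : ℝ → ℝ) (hν : ∀ s : ℝ, ν s = ∫ q in (0:ℝ)..s, deriv ζ q * deriv β q)
    (𝔅 : ℝ → ℝ) (h𝔅 : ∀ s : ℝ, 𝔅 s = ∫ q in (0:ℝ)..s, ζ q * deriv β q)
    (s s' sbar : ℝ) (hsbar : β sbar = (β s + β s') / 2) :
    (ν s - ν s') ^ 2 ≤ 4 * Lβ * Lζ * (𝔅 s + 𝔅 s' - 2 * 𝔅 sbar) := by
  have hνi : ∀ u v, IntervalIntegrable (fun q => deriv ζ q * deriv β q) volume u v :=
    ((measurable_deriv ζ).mul (measurable_deriv β)).intervalIntegrable_of_abs_le fun q => by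
      rw [Pi.mul_apply, abs_mul]
      exact mul_le_mul (norm_deriv_le_of_lipschitz hζlip) (norm_deriv_le_of_lipschitz hβlip)
        (abs_nonneg _) (NNReal.coe_nonneg _)
  have h𝔅i : ∀ u v, IntervalIntegrable (fun q => ζ q * deriv β q) volume u v := fun u v =>
    (hβlip.intervalIntegrable_deriv u v).continuousOn_mul hζlip.continuous.continuousOn
  have hν_sub : ∀ u, ν u - ν sbar = ∫ q in sbar..u, deriv ζ q * deriv β q := fun u => by
    rw [hν, hν, integral_interval_sub_left (hνi 0 u) (hνi 0 sbar)]
  have h𝔅_sub : ∀ u, 𝔅 u - 𝔅 sbar = ∫ q in sbar..u, ζ q * deriv β q := fun u => by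
    rw [h𝔅, h𝔅, integral_interval_sub_left (h𝔅i 0 u) (h𝔅i 0 sbar)]
  have hs := sq_integral_deriv_mul_deriv_le hβmono hζmono hβlip hζlip sbar s
  have hs' := sq_integral_deriv_mul_deriv_le hβmono hζmono hβlip hζlip sbar s'
  rw [← hν_sub, ← h𝔅_sub, Real.coe_toNNReal _ hLβ.le, Real.coe_toNNReal _ hLζ.le] at hs hs'
  have hcancel : ζ sbar * (β s - β sbar) + ζ sbar * (β s' - β sbar) = 0 := by
    rw [hsbar]; ring
  calc (ν s - ν s') ^ 2
      ≤ 2 * (ν s - ν sbar) ^ 2 + 2 * (ν s' - ν sbar) ^ 2 := by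
        nlinarith [sq_nonneg (ν s + ν s' - 2 * ν sbar)]
    _ ≤ 4 * Lβ * Lζ * ((𝔅 s - 𝔅 sbar - ζ sbar * (β s - β sbar))
          + (𝔅 s' - 𝔅 sbar - ζ sbar * (β s' - β sbar))) := by linarith
    _ = 4 * Lβ * Lζ * (𝔅 s + 𝔅 s' - 2 * 𝔅 sbar) := by
        linear_combination (-4 * Lβ * Lζ) * hcancel

/-- For all reals `s, s'` and any `s̄` with `β s̄ = (β s + β s')/2`, one has
`(ν s - ν s')² ≤ 4 Lβ Lζ (𝔅 s + 𝔅 s' - 2 𝔅 s̄)`, where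
`ν s = ∫ q in 0..s, ζ' q * β' q` and `𝔅 s = ∫ q in 0..s, ζ q * β' q`. -/
theorem stmt6 (β ζ : ℝ → ℝ) (Lβ Lζ : ℝ) (hLβ : 0 < Lβ) (hLζ : 0 < Lζ)
    (hβmono : Monotone β) (hζmono : Monotone ζ)
    (hβlip : LipschitzWith Lβ.toNNReal β) (hζlip : LipschitzWith Lζ.toNNReal ζ)
    (hβ0 : β 0 = 0) (hζ0 : ζ 0 = 0)
    (ν : ℝ → ℝ) (hν : ∀ s : ℝ, ν s = ∫ q in (0:ℝ)..s, deriv ζ q * deriv β q)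
    (𝔅 : ℝ → ℝ) (h𝔅 : ∀ s : ℝ, 𝔅 s = ∫ q in (0:ℝ)..s, ζ q * deriv β q)
    (s s' sbar : ℝ) (hsbar : β sbar = (β s + β s') / 2) :
    (ν s - ν s') ^ 2 ≤ 4 * Lβ * Lζ * (𝔅 s + 𝔅 s' - 2 * 𝔅 sbar) :=
  stmt6_general β ζ Lβ Lζ hLβ hLζ hβmono hζmono hβlip hζlip ν hν 𝔅 h𝔅 s s' sbar hsbar
end

section
/- Let Ω be an open bounded subset of ℝ^d, T > 0, H : ℝ → [0, ∞) a convex continuous nonnegative function, and C ≥ 0. Let Z : [0, T] → L²(Ω) be continuous for the weak topology of L²(Ω) (i.e. for every g ∈ L²(Ω), the map t ↦ ∫_Ω Z(t)(x) g(x) dx is continuous on [0, T]). If ∫_Ω H(Z(t)(x)) dx ≤ C for almost every t ∈ (0, T), then ∫_Ω H(Z(t)(x)) dx ≤ C for every t ∈ [0, T]. -/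
/-!
If `α, β` are bounded measurable functions on `Ω` with `α x * y + β x ≤ H y` for all `x, y`,
then `t ↦ ∫ α Z(t) + β` is continuous on `[0, T]` by weak continuity, and it is bounded by
`C` at almost every time, hence at every time. Taking for `α x * y + β x` the tangent line of `H`
at `Z(t)(x)`, switched off where `|Z(t)(x)| > M`, these integrals increase to `∫ H(Z(t))` as
`M → ∞` by monotone convergence.
-/

open MeasureTheory Set

namespace ConvexOn

variable {f : ℝ → ℝ}

theorem monotone_rightDeriv (hf : ConvexOn ℝ univ f) :
    Monotone fun x => derivWithin f (Ioi x) x := by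
  simpa [interior_univ] using hf.monotoneOn_rightDeriv

theorem add_rightDeriv_mul_sub_le (hf : ConvexOn ℝ univ f) (x y : ℝ) :
    f x + derivWithin f (Ioi x) x * (y - x) ≤ f y := by
  have hx : x ∈ interior (univ : Set ℝ) := by simp
  rcases lt_trichotomy x y with hxy | rfl | hyx
  · have h := hf.rightDeriv_le_slope_of_mem_interior hx (mem_univ y) hxy
    rw [slope_def_field, le_div_iff₀ (sub_pos.2 hxy)] at h
    linarith
  · simp
  · have h := (hf.slope_le_leftDeriv_of_mem_interior (mem_univ y) hx hyx).trans
      (hf.leftDeriv_le_rightDeriv_of_mem_interior hx)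
    rw [slope_def_field, div_le_iff₀ (sub_pos.2 hyx)] at h
    linarith

end ConvexOn

/-- `y ↦ truncTangentSlope f M v * y + truncTangentIntercept f M v` is the tangent line of `f` at
`v` with the right derivative as slope, replaced by `0` when `|v| > M`, so that it stays below
`f ≥ 0` while being bounded in `v`. -/
noncomputable def truncTangentSlope (f : ℝ → ℝ) (M : ℝ) : ℝ → ℝ :=
  (Icc (-M) M).indicator fun v => derivWithin f (Ioi v) v

noncomputable def truncTangentIntercept (f : ℝ → ℝ) (M : ℝ) : ℝ → ℝ :=
  (Icc (-M) M).indicator fun v => f v - derivWithin f (Ioi v) v * v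

section TruncTangent

variable {f : ℝ → ℝ} {M : ℝ}

theorem truncTangent_apply_self (v : ℝ) :
    truncTangentSlope f M v * v + truncTangentIntercept f M v = (Icc (-M) M).indicator f v := by
  by_cases hv : v ∈ Icc (-M) M <;> simp [truncTangentSlope, truncTangentIntercept, hv]

theorem truncTangent_le (hf : ConvexOn ℝ univ f) (hf0 : ∀ y, 0 ≤ f y) (v y : ℝ) :
    truncTangentSlope f M v * y + truncTangentIntercept f M v ≤ f y := by
  by_cases hv : v ∈ Icc (-M) M
  · simp only [truncTangentSlope, truncTangentIntercept, indicator_of_mem hv]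
    linarith [hf.add_rightDeriv_mul_sub_le v y]
  · simp [truncTangentSlope, truncTangentIntercept, hv, hf0 y]

theorem ConvexOn.measurable_truncTangentSlope (hf : ConvexOn ℝ univ f) :
    Measurable (truncTangentSlope f M) :=
  hf.monotone_rightDeriv.measurable.indicator measurableSet_Icc

theorem ConvexOn.measurable_truncTangentIntercept (hf : ConvexOn ℝ univ f) (hc : Continuous f) :
    Measurable (truncTangentIntercept f M) :=
  (hc.measurable.sub (hf.monotone_rightDeriv.measurable.mul measurable_id)).indicator
    measurableSet_Icc

theorem ConvexOn.exists_bound_truncTangent (hf : ConvexOn ℝ univ f) (hc : Continuous f) :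
    ∃ K, ∀ v, |truncTangentSlope f M v| ≤ K ∧ |truncTangentIntercept f M v| ≤ K ∧
      |(Icc (-M) M).indicator f v| ≤ K := by
  obtain ⟨Kf, hKf⟩ := isCompact_Icc.exists_bound_of_continuousOn hc.continuousOn (s := Icc (-M) M)
  set s := fun v => derivWithin f (Ioi v) v
  set Ks := |s (-M)| + |s M|
  refine ⟨|Kf| + Ks + Ks * |M|, fun v => ?_⟩
  by_cases hv : v ∈ Icc (-M) M
  · have hs : |s v| ≤ Ks := abs_le.2
      ⟨by linarith [hf.monotone_rightDeriv hv.1, neg_abs_le (s (-M)), abs_nonneg (s M)],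
       by linarith [hf.monotone_rightDeriv hv.2, le_abs_self (s M), abs_nonneg (s (-M))]⟩
    have hfv : |f v| ≤ |Kf| := (hKf v hv).trans (le_abs_self Kf)
    have hvM : |v| ≤ |M| := abs_le_abs hv.2 (by linarith [hv.1])
    have hsv : |s v * v| ≤ Ks * |M| := by
      rw [abs_mul]; exact mul_le_mul hs hvM (abs_nonneg v) (hs.trans' (abs_nonneg _))
    have hKs : 0 ≤ Ks := by positivity
    simp only [truncTangentSlope, truncTangentIntercept, indicator_of_mem hv]
    refine ⟨by nlinarith [abs_nonneg Kf, abs_nonneg M], ?_, by nlinarith [abs_nonneg M]⟩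
    calc |f v - s v * v| ≤ |f v| + |s v * v| := abs_sub _ _
      _ ≤ |Kf| + Ks + Ks * |M| := by linarith
  · simp only [truncTangentSlope, truncTangentIntercept, indicator_of_notMem hv, abs_zero]
    have : 0 ≤ |Kf| + Ks + Ks * |M| := by positivity
    exact ⟨this, this, this⟩

end TruncTangent

section Integral

variable {X : Type*} [MeasurableSpace X] {μ : Measure X}

theorem ofReal_integral_le_lintegral_ofReal {f : X → ℝ} (hf : Integrable f μ) :
    ENNReal.ofReal (∫ x, f x ∂μ) ≤ ∫⁻ x, ENNReal.ofReal (f x) ∂μ := by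
  rw [integral_eq_lintegral_pos_part_sub_lintegral_neg_part hf]
  exact (ENNReal.ofReal_le_ofReal (sub_le_self _ ENNReal.toReal_nonneg)).trans
    ENNReal.ofReal_toReal_le

theorem integral_le_of_ae_le_of_lintegral_ofReal_le {f g : X → ℝ} {c : ℝ} (hf : Integrable f μ)
    (hfg : ∀ᵐ x ∂μ, f x ≤ g x) (hg : ∫⁻ x, ENNReal.ofReal (g x) ∂μ ≤ ENNReal.ofReal c)
    (hc : 0 ≤ c) : ∫ x, f x ∂μ ≤ c :=
  (ENNReal.ofReal_le_ofReal_iff hc).1 <| (ofReal_integral_le_lintegral_ofReal hf).trans <|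
    (lintegral_mono_ae (hfg.mono fun _ hx => ENNReal.ofReal_le_ofReal hx)).trans hg

theorem lintegral_ofReal_comp_eq_iSup_indicator {u : X → ℝ} (hu : Measurable u) {f : ℝ → ℝ}
    (hf : Measurable f) :
    ∫⁻ x, ENNReal.ofReal (f (u x)) ∂μ =
      ⨆ M : ℕ, ∫⁻ x, ENNReal.ofReal ((Icc (-M : ℝ) M).indicator f (u x)) ∂μ := by
  have hind : ∀ (M : ℕ) v, ENNReal.ofReal ((Icc (-M : ℝ) M).indicator f v) =
      (Icc (-M : ℝ) M).indicator (fun v => ENNReal.ofReal (f v)) v := fun M v => by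
    by_cases hv : v ∈ Icc (-M : ℝ) M <;> simp [hv]
  simp_rw [hind]
  rw [← lintegral_iSup]
  · refine lintegral_congr fun x => le_antisymm ?_ (iSup_le fun M => indicator_le_self _ _ _)
    refine le_iSup_of_le ⌈|u x|⌉₊ (indicator_of_mem ?_ (fun v => ENNReal.ofReal (f v))).ge
    exact abs_le.1 (Nat.le_ceil _)
  · exact fun M => (hf.ennreal_ofReal.indicator measurableSet_Icc).comp hu
  · intro M N hMN x
    refine indicator_le_indicator_of_subset (Icc_subset_Icc ?_ ?_) (fun _ => zero_le) _ <;>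
      simp [hMN]

end Integral

theorem ContinuousOn.le_of_ae_Ioo_le {φ : ℝ → ℝ} {a b C : ℝ} (hab : a ≠ b)
    (hφ : ContinuousOn φ (Icc a b)) (hle : ∀ᵐ t ∂volume.restrict (Ioo a b), φ t ≤ C) :
    ∀ t ∈ Icc a b, φ t ≤ C := by
  have hdense : Dense {t | t ∈ Ioo a b → φ t ≤ C} :=
    Measure.dense_of_ae ((ae_restrict_iff' measurableSet_Ioo).1 hle)
  have hclosed : IsClosed (Icc a b ∩ φ ⁻¹' Iic C) :=
    hφ.preimage_isClosed_of_isClosed isClosed_Icc isClosed_Iic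
  have hIoo : Ioo a b ⊆ Icc a b ∩ φ ⁻¹' Iic C :=
    (hdense.open_subset_closure_inter isOpen_Ioo).trans <|
      closure_minimal (fun t ht => ⟨Ioo_subset_Icc_self ht.1, ht.2 ht.1⟩) hclosed
  rw [← closure_Ioo hab]
  exact fun t ht => (closure_minimal hIoo hclosed ht).2

theorem lintegral_ofReal_comp_le_of_affine_minorants {X : Type*} [MeasurableSpace X]
    {μ : Measure X} [IsFiniteMeasure μ] {H : ℝ → ℝ} (hconv : ConvexOn ℝ univ H)
    (hcont : Continuous H) (hnn : ∀ y, 0 ≤ H y) {u : X → ℝ} (hu : AEStronglyMeasurable u μ)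
    {c : ℝ} (h : ∀ α β : X → ℝ, MemLp α ⊤ μ → MemLp β ⊤ μ → (∀ x y, α x * y + β x ≤ H y) →
      ∫ x, α x * u x + β x ∂μ ≤ c) :
    ∫⁻ x, ENNReal.ofReal (H (u x)) ∂μ ≤ ENNReal.ofReal c := by
  obtain ⟨v, hv, huv⟩ : ∃ v, Measurable v ∧ u =ᵐ[μ] v :=
    ⟨hu.mk u, hu.stronglyMeasurable_mk.measurable, hu.ae_eq_mk⟩
  rw [lintegral_congr_ae (huv.mono fun x hx => by rw [hx]),
    lintegral_ofReal_comp_eq_iSup_indicator hv hcont.measurable]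
  refine iSup_le fun M => ?_
  obtain ⟨K, hK⟩ := hconv.exists_bound_truncTangent hcont (M := M)
  set α := fun x => truncTangentSlope H M (v x)
  set β := fun x => truncTangentIntercept H M (v x)
  have hα : MemLp α ⊤ μ := memLp_top_of_bound
    (hconv.measurable_truncTangentSlope.comp hv).aestronglyMeasurable K
    (ae_of_all _ fun x => (hK _).1)
  have hβ : MemLp β ⊤ μ := memLp_top_of_bound
    ((hconv.measurable_truncTangentIntercept hcont).comp hv).aestronglyMeasurable K
    (ae_of_all _ fun x => (hK _).2.1)
  have hind : Integrable (fun x => (Icc (-M : ℝ) M).indicator H (v x)) μ :=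
    .of_bound ((hcont.measurable.indicator measurableSet_Icc).comp hv).aestronglyMeasurable K
      (ae_of_all _ fun x => (hK _).2.2)
  have heq : ∫ x, α x * u x + β x ∂μ = ∫ x, (Icc (-M : ℝ) M).indicator H (v x) ∂μ :=
    integral_congr_ae <| huv.mono fun x hx => by
      simp only [α, β, hx, truncTangent_apply_self]
  rw [← ofReal_integral_eq_lintegral_ofReal hind
    (ae_of_all _ fun x => indicator_nonneg (fun y _ => hnn y) _), ← heq]
  exact ENNReal.ofReal_le_ofReal <| h α β hα hβ fun x y => truncTangent_le hconv hnn _ y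

theorem stmt19_general (d : ℕ) (Ω : Set (EuclideanSpace ℝ (Fin d)))
    (hΩb : Bornology.IsBounded Ω)
    (T : ℝ) (hT : 0 < T)
    (H : ℝ → ℝ) (hHconv : ConvexOn ℝ Set.univ H) (hHcont : Continuous H)
    (hHnn : ∀ x : ℝ, 0 ≤ H x)
    (C : ℝ) (hC : 0 ≤ C)
    (Z : ℝ → EuclideanSpace ℝ (Fin d) → ℝ)
    (hZmem : ∀ t ∈ Set.Icc (0:ℝ) T, MemLp (Z t) 2 (volume.restrict Ω))
    (hZweak : ∀ g : EuclideanSpace ℝ (Fin d) → ℝ, MemLp g 2 (volume.restrict Ω) →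
      ContinuousOn (fun t => ∫ x, Z t x * g x ∂(volume.restrict Ω)) (Set.Icc (0:ℝ) T))
    (hbound : ∀ᵐ t ∂(volume.restrict (Set.Ioo (0:ℝ) T)),
      ∫⁻ x, ENNReal.ofReal (H (Z t x)) ∂(volume.restrict Ω) ≤ ENNReal.ofReal C) :
    ∀ t ∈ Set.Icc (0:ℝ) T,
      ∫⁻ x, ENNReal.ofReal (H (Z t x)) ∂(volume.restrict Ω) ≤ ENNReal.ofReal C := by
  intro t₀ ht₀
  have : IsFiniteMeasure (volume.restrict Ω) := isFiniteMeasure_restrict.2 hΩb.measure_lt_top.ne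
  refine lintegral_ofReal_comp_le_of_affine_minorants hHconv hHcont hHnn (hZmem t₀ ht₀).1
    fun α β hα hβ hαβ => ?_
  have hα₂ : MemLp α 2 (volume.restrict Ω) := hα.mono_exponent le_top
  have hαZ : ∀ t ∈ Icc 0 T, Integrable (fun x => α x * Z t x) (volume.restrict Ω) :=
    fun t ht => hα₂.integrable_mul (hZmem t ht)
  refine ContinuousOn.le_of_ae_Ioo_le (φ := fun t => ∫ x, α x * Z t x + β x ∂volume.restrict Ω)
    hT.ne ?_ ?_ t₀ ht₀
  · refine ((hZweak α hα₂).add (continuousOn_const (c := ∫ x, β x ∂volume.restrict Ω))).congr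
      fun t ht => ?_
    rw [Pi.add_apply, integral_add (hαZ t ht) (hβ.integrable le_top)]
    simp only [mul_comm (α _)]
  · filter_upwards [hbound, ae_restrict_mem measurableSet_Ioo] with t hbt ht
    exact integral_le_of_ae_le_of_lintegral_ofReal_le
      ((hαZ t (Ioo_subset_Icc_self ht)).add (hβ.integrable le_top))
      (ae_of_all _ fun x => hαβ x _) hbt hC

/-- If `Z : [0,T] → L²(Ω)` is continuous for the weak topology of `L²(Ω)` and
`∫_Ω H(Z(t)) dx ≤ C` for a.e. `t ∈ (0,T)`, where `H : ℝ → [0,∞)` is convex continuous,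
then `∫_Ω H(Z(t)) dx ≤ C` for every `t ∈ [0,T]` (integrals taken in `[0,∞]`). -/
theorem stmt19 (d : ℕ) (Ω : Set (EuclideanSpace ℝ (Fin d)))
    (hΩo : IsOpen Ω) (hΩb : Bornology.IsBounded Ω)
    (T : ℝ) (hT : 0 < T)
    (H : ℝ → ℝ) (hHconv : ConvexOn ℝ Set.univ H) (hHcont : Continuous H)
    (hHnn : ∀ x : ℝ, 0 ≤ H x)
    (C : ℝ) (hC : 0 ≤ C)
    (Z : ℝ → EuclideanSpace ℝ (Fin d) → ℝ)
    (hZmem : ∀ t ∈ Set.Icc (0:ℝ) T, MemLp (Z t) 2 (volume.restrict Ω))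
    (hZweak : ∀ g : EuclideanSpace ℝ (Fin d) → ℝ, MemLp g 2 (volume.restrict Ω) →
      ContinuousOn (fun t => ∫ x, Z t x * g x ∂(volume.restrict Ω)) (Set.Icc (0:ℝ) T))
    (hbound : ∀ᵐ t ∂(volume.restrict (Set.Ioo (0:ℝ) T)),
      ∫⁻ x, ENNReal.ofReal (H (Z t x)) ∂(volume.restrict Ω) ≤ ENNReal.ofReal C) :
    ∀ t ∈ Set.Icc (0:ℝ) T,
      ∫⁻ x, ENNReal.ofReal (H (Z t x)) ∂(volume.restrict Ω) ≤ ENNReal.ofReal C :=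
  stmt19_general d Ω hΩb T hT H hHconv hHcont hHnn C hC Z hZmem hZweak hbound
end
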